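/- arXiv:1606.09444 — 3 statements merged into one kernel-verified Lean document; each statement's English description precedes it below -/
import Mathlib

section
/- Let k' be an algebraically closed field of characteristic p, q = p^r a power of p, and π ∈ k' a nonzero element. Let σ be the ring endomorphism of k'[[ε]] fixing ε and applying x ↦ x^q to each coefficient, acting entrywise on matrices. Then there exists g ∈ GL₃(k'[[ε]]) such that A·σ(g) = g·B, where A is the 3×3 matrix with rows (0,1,0), (0,π,1), (ε,0,0) and B is the 3×3 matrix with rows (1,0,0), (0,0,1), (0,ε,0). -/
/-!
Write `S` for `σ` acting on coefficients. The columns `g₁, g₂, g₃` of `g` must satisfy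
`A S(g₁) = g₁`, `A S(g₂) = ε g₃` and `A S(g₃) = g₂`. Solving these leads to
`g₁ = (S f, f, ε S² f)` with `f = π S f + ε S³ f`, and to `g₃ = (x, y, S² y)`, `g₂ = A S(g₃)` with
`y = S² x + π x` and `ε x = σ(π) S² y + S⁴ y`. Both equations are solved one coefficient at a time,
because `t ^ q ^ n + a t ^ q ^ m = u` (`m < n`) always has a root in an algebraically closed field.
We can choose the constant terms `f(0)`, `y(0)` to be nonzero. This is exactly what makes
`det g(0) = σ(f(0)) σ³(y(0)) σ²(y(0))` nonzero.
-/

open Polynomial in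
theorem exists_pow_add_mul_pow_eq {K : Type*} [Field K] [IsAlgClosed K] {m n : ℕ} (hmn : m < n)
    (a u : K) : ∃ t : K, t ^ n + a * t ^ m = u := by
  have hdeg : (X ^ n + C a * X ^ m - C u : K[X]).degree = n := by
    rw [add_sub_assoc, degree_add_eq_left_of_degree_lt] <;> rw [degree_X_pow]
    calc (C a * X ^ m - C u).degree ≤ (m : WithBot ℕ) := by compute_degree!
      _ < n := by exact_mod_cast hmn
  obtain ⟨t, ht⟩ := IsAlgClosed.exists_root _ (by rw [hdeg]; exact_mod_cast (by omega : n ≠ 0))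
  refine ⟨t, ?_⟩
  simpa [sub_eq_zero] using ht

theorem exists_ne_zero_pow_add_mul_pow_eq_zero {K : Type*} [Field K] [IsAlgClosed K] {m n : ℕ}
    (hmn : m < n) {a : K} (ha : a ≠ 0) : ∃ t ≠ 0, t ^ n + a * t ^ m = 0 := by
  obtain ⟨t, ht⟩ := IsAlgClosed.exists_pow_nat_eq (-a) (Nat.sub_pos_of_lt hmn)
  refine ⟨t, ?_, ?_⟩
  · rintro rfl
    exact ha (by simpa [zero_pow (Nat.sub_pos_of_lt hmn).ne'] using ht.symm)
  · rw [← Nat.sub_add_cancel hmn.le, pow_add, ht]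
    ring

theorem Function.iterate_eq_pow_pow {M : Type*} [Monoid M] {σ : M → M} {q : ℕ}
    (hσ : ∀ a, σ a = a ^ q) (n : ℕ) (a : M) : σ^[n] a = a ^ q ^ n := by
  induction n generalizing a with
  | zero => simp
  | succ n ih => rw [Function.iterate_succ_apply, ih, hσ, ← pow_mul, pow_succ']

open PowerSeries

theorem PowerSeries.constantCoeff_map {R S : Type*} [CommRing R] [CommRing S] (σ : R →+* S)
    (φ : R⟦X⟧) : constantCoeff (map σ φ) = σ (constantCoeff φ) := by
  rw [← coeff_zero_eq_constantCoeff_apply, coeff_map, coeff_zero_eq_constantCoeff_apply]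

section
variable {R : Type*} [CommRing R] (σ : R →+* R) (π : R)

noncomputable def sigmaConjugator (f x y : R⟦X⟧) : Matrix (Fin 3) (Fin 3) R⟦X⟧ :=
  !![map σ f, map σ y, x;
     f, C π * map σ y + map σ (map σ (map σ y)), y;
     X * map σ (map σ f), X * map σ x, map σ (map σ y)]

theorem mul_mapMatrix_sigmaConjugator {f x y : R⟦X⟧}
    (hf : f = C π * map σ f + X * map σ (map σ (map σ f)))
    (hy : y = map σ (map σ x) + C π * x)
    (hx : X * x = C (σ π) * map σ (map σ y) + map σ (map σ (map σ (map σ y)))) :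
    !![0, 1, 0; 0, C π, 1; X, 0, 0] * (map σ).mapMatrix (sigmaConjugator σ π f x y) =
      sigmaConjugator σ π f x y * !![1, 0, 0; 0, 0, 1; 0, X, 0] := by
  refine Matrix.ext fun i j => ?_
  fin_cases i <;> fin_cases j <;>
    simp only [sigmaConjugator, RingHom.mapMatrix_apply, Matrix.map_apply, Matrix.mul_apply,
        Fin.sum_univ_three, Fin.zero_eta, Fin.mk_one, Fin.reduceFinMk, Fin.isValue, Matrix.of_apply,
      Matrix.cons_val', Matrix.cons_val_fin_one, Matrix.cons_val_zero, Matrix.cons_val_one, Matrix.cons_val, map_add, map_mul, map_C, map_X,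
      zero_mul, mul_zero, one_mul, mul_one, zero_add, add_zero]
  · linear_combination -hx
  · exact hf.symm
  · linear_combination (-C π) * hx - X * hy
  · ring

theorem constantCoeff_det_sigmaConjugator {f x y : R⟦X⟧}
    (hf : constantCoeff f = π * σ (constantCoeff f)) :
    constantCoeff (sigmaConjugator σ π f x y).det =
      σ (constantCoeff f) * σ (σ (σ (constantCoeff y))) * σ (σ (constantCoeff y)) := by
  rw [Matrix.det_fin_three]
  simp only [sigmaConjugator, Matrix.of_apply, Matrix.cons_val', Matrix.cons_val_fin_one,
    Matrix.cons_val_zero, Matrix.cons_val_one, Matrix.cons_val, map_sub, map_add, map_mul,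
    constantCoeff_map, constantCoeff_C, constantCoeff_X, zero_mul, mul_zero, sub_zero, add_zero]
  linear_combination (-σ (constantCoeff y) * σ (σ (constantCoeff y))) * hf
end

section Frobenius

variable {K : Type*} [Field K] [IsAlgClosed K] {q : ℕ} (hq : 1 < q) {σ : K →+* K}
  (hσ : ∀ a, σ a = a ^ q)
include hq hσ

theorem exists_iterate_add_mul_iterate_eq {m n : ℕ} (hmn : m < n) (a u : K) :
    ∃ t, σ^[n] t + a * σ^[m] t = u := by
  simpa only [Function.iterate_eq_pow_pow hσ] using
    exists_pow_add_mul_pow_eq (Nat.pow_lt_pow_right hq hmn) a u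

theorem exists_ne_zero_iterate_add_mul_iterate_eq_zero {m n : ℕ} (hmn : m < n) {a : K}
    (ha : a ≠ 0) : ∃ t ≠ 0, σ^[n] t + a * σ^[m] t = 0 := by
  simpa only [Function.iterate_eq_pow_pow hσ] using
    exists_ne_zero_pow_add_mul_pow_eq_zero (Nat.pow_lt_pow_right hq hmn) ha

theorem exists_eq_C_mul_map_add_X_mul_map {π : K} (hπ : π ≠ 0) :
    ∃ f : K⟦X⟧, f = C π * map σ f + X * map σ (map σ (map σ f)) ∧ constantCoeff f ≠ 0 := by
  have hπ_inv : -π⁻¹ ≠ 0 := neg_ne_zero.2 (inv_ne_zero hπ)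
  obtain ⟨b₀, hb₀, hb₀_eq⟩ :=
    exists_ne_zero_iterate_add_mul_iterate_eq_zero hq hσ zero_lt_one hπ_inv
  have hb₀_fix : b₀ = π * σ b₀ := by
    simp only [Function.iterate_one, Function.iterate_zero_apply] at hb₀_eq
    field_simp at hb₀_eq
    linear_combination -hb₀_eq
  have hstep (u : K) : ∃ t, t = π * σ t + σ (σ (σ u)) := by
    obtain ⟨t, ht⟩ := exists_iterate_add_mul_iterate_eq hq hσ zero_lt_one (-π⁻¹)
      (-π⁻¹ * σ (σ (σ u)))
    refine ⟨t, ?_⟩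
    simp only [Function.iterate_one, Function.iterate_zero_apply] at ht
    field_simp at ht
    linear_combination -ht
  choose next hnext using hstep
  refine ⟨mk fun n => next^[n] b₀, ?_, by simpa using hb₀⟩
  ext (_ | n)
  · simpa [constantCoeff_map] using hb₀_fix
  · simpa [coeff_map, Function.iterate_succ_apply'] using hnext _

theorem exists_X_mul_eq_C_mul_map_add_map {π : K} (hπ : π ≠ 0) :
    ∃ x y : K⟦X⟧, y = map σ (map σ x) + C π * x ∧
      X * x = C (σ π) * map σ (map σ y) + map σ (map σ (map σ (map σ y))) ∧
      constantCoeff y ≠ 0 := by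
  obtain ⟨z₀, hz₀, hz₀_eq⟩ := exists_ne_zero_iterate_add_mul_iterate_eq_zero hq hσ
    (by norm_num : 2 < 4) ((map_ne_zero σ).2 hπ)
  obtain ⟨x₀, hx₀⟩ := exists_iterate_add_mul_iterate_eq hq hσ (by norm_num : 0 < 2) π z₀
  simp only [Function.iterate_succ_apply', Function.iterate_zero_apply] at hz₀_eq hx₀
  subst hx₀
  -- First solve for `z = σ² t + π t`, then for `t`.
  have hstep (u : K) : ∃ t, σ π * σ (σ (σ (σ t) + π * t)) +
      σ (σ (σ (σ (σ (σ t) + π * t)))) = u := by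
    obtain ⟨z, hz⟩ := exists_iterate_add_mul_iterate_eq hq hσ (by norm_num : 2 < 4) (σ π) u
    obtain ⟨t, rfl⟩ := exists_iterate_add_mul_iterate_eq hq hσ (by norm_num : 0 < 2) π z
    simp only [Function.iterate_succ_apply', Function.iterate_zero_apply] at hz
    exact ⟨t, by linear_combination hz⟩
  choose next hnext using hstep
  refine ⟨mk fun n => next^[n] x₀, _, rfl, ?_, ?_⟩
  · ext (_ | n)
    · simp only [map_add, map_mul, coeff_zero_eq_constantCoeff, constantCoeff_X, constantCoeff_mk,
        Function.iterate_zero, id_eq, zero_mul, map_C, constantCoeff_C, constantCoeff_map] at hz₀_eq ⊢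
      linear_combination -hz₀_eq
    · simpa [coeff_map, Function.iterate_succ_apply'] using (hnext _).symm
  · simpa [constantCoeff_map] using hz₀

end Frobenius

theorem isUnit_sigmaConjugator {K : Type*} [Field K] {σ : K →+* K} {π : K} {f x y : K⟦X⟧}
    (hf : f = C π * map σ f + X * map σ (map σ (map σ f))) (hf₀ : constantCoeff f ≠ 0)
    (hy₀ : constantCoeff y ≠ 0) : IsUnit (sigmaConjugator σ π f x y) := by
  have hf_const : constantCoeff f = π * σ (constantCoeff f) := by
    simpa [constantCoeff_map] using congrArg constantCoeff hf
  rw [Matrix.isUnit_iff_isUnit_det, isUnit_iff_constantCoeff,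
    constantCoeff_det_sigmaConjugator σ π hf_const, isUnit_iff_ne_zero]
  simp [hf₀, hy₀]

theorem statement3_general (p r q : ℕ) (hp : p.Prime) (hr : 0 < r) (hq : q = p ^ r)
    (k' : Type*) [Field k'] [IsAlgClosed k']
    (π : k') (hπ : π ≠ 0)
    (σ : k' →+* k') (hσ : ∀ a : k', σ a = a ^ q) :
    ∃ g : GL (Fin 3) (PowerSeries k'),
      (!![0, 1, 0; 0, PowerSeries.C π, 1; PowerSeries.X, 0, 0] :
          Matrix (Fin 3) (Fin 3) (PowerSeries k')) *
        (RingHom.mapMatrix (PowerSeries.map σ)) (g : Matrix (Fin 3) (Fin 3) (PowerSeries k'))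
      = (g : Matrix (Fin 3) (Fin 3) (PowerSeries k')) *
        (!![1, 0, 0; 0, 0, 1; 0, PowerSeries.X, 0] :
          Matrix (Fin 3) (Fin 3) (PowerSeries k')) := by
  have hq_one : 1 < q := hq ▸ Nat.one_lt_pow hr.ne' hp.one_lt
  obtain ⟨f, hf, hf₀⟩ := exists_eq_C_mul_map_add_X_mul_map hq_one hσ hπ
  obtain ⟨x, y, hy, hx, hy₀⟩ := exists_X_mul_eq_C_mul_map_add_map hq_one hσ hπ
  exact ⟨(isUnit_sigmaConjugator hf hf₀ hy₀).unit, mul_mapMatrix_sigmaConjugator σ π hf hy hx⟩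

/-- Equation (1) of the paper: over an algebraically closed field `k'` of characteristic `p`
with `π ≠ 0`, the two displayed matrices are `σ`-conjugate under `GL₃(k'[[ε]])`. -/
theorem statement3 (p r q : ℕ) (hp : p.Prime) (hr : 0 < r) (hq : q = p ^ r)
    (k' : Type*) [Field k'] [IsAlgClosed k'] [CharP k' p]
    (π : k') (hπ : π ≠ 0)
    (σ : k' →+* k') (hσ : ∀ a : k', σ a = a ^ q) :
    ∃ g : GL (Fin 3) (PowerSeries k'),
      (!![0, 1, 0; 0, PowerSeries.C π, 1; PowerSeries.X, 0, 0] :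
          Matrix (Fin 3) (Fin 3) (PowerSeries k')) *
        (RingHom.mapMatrix (PowerSeries.map σ)) (g : Matrix (Fin 3) (Fin 3) (PowerSeries k'))
      = (g : Matrix (Fin 3) (Fin 3) (PowerSeries k')) *
        (!![1, 0, 0; 0, 0, 1; 0, PowerSeries.X, 0] :
          Matrix (Fin 3) (Fin 3) (PowerSeries k')) :=
  statement3_general p r q hp hr hq k' π hπ σ hσ
end

section
/- Suppose (a_i)_{i≥0} and (b_i)_{i≥0} are elements of k' satisfying: a₀ ≠ 0; π^q·a₀^{q²} + a₀^{q⁴} = 0; π^q·a_i^{q²} + a_i^{q⁴} = b_{i−1} for all i ≥ 1; and b_i^{q²} + π·b_i = a_i for all i ≥ 0. Then for all i ≥ 0 one has v(a_i) = 1/(q^{6i+1}(q²−1)) and v(b_i) = 1/(q^{6i+3}(q²−1)). -/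
section aux

variable {K : Type*} [Field K] (v : K → WithTop ℚ)

lemma aux_vone (hv0 : ∀ x : K, v x = ⊤ ↔ x = 0)
    (hvmul : ∀ x y : K, v (x * y) = v x + v y) : v 1 = 0 := by
  have h := hvmul 1 1
  rw [one_mul] at h
  have h1 : v (1 : K) ≠ ⊤ := by simp [hv0]
  obtain ⟨t, ht⟩ := WithTop.ne_top_iff_exists.mp h1
  rw [← ht] at h ⊢
  have h2 : t = t + t := by exact_mod_cast h
  have h3 : t = 0 := by linarith
  exact_mod_cast h3

lemma aux_vneg (hv0 : ∀ x : K, v x = ⊤ ↔ x = 0)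
    (hvmul : ∀ x y : K, v (x * y) = v x + v y) (x : K) : v (-x) = v x := by
  have hm1 : v (-1 : K) = 0 := by
    have h := hvmul (-1) (-1)
    rw [neg_mul_neg, one_mul, aux_vone v hv0 hvmul] at h
    have h1 : v (-1 : K) ≠ ⊤ := by simp [hv0]
    obtain ⟨t, ht⟩ := WithTop.ne_top_iff_exists.mp h1
    rw [← ht] at h ⊢
    have h2 : (0 : ℚ) = t + t := by exact_mod_cast h
    have h3 : t = 0 := by linarith
    exact_mod_cast h3
  rw [← neg_one_mul, hvmul, hm1, zero_add]

lemma aux_vpow (hv0 : ∀ x : K, v x = ⊤ ↔ x = 0)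
    (hvmul : ∀ x y : K, v (x * y) = v x + v y) (x : K) {t : ℚ}
    (h : v x = (t : ℚ)) (n : ℕ) :
    v (x ^ n) = (((n : ℚ) * t : ℚ) : WithTop ℚ) := by
  induction n with
  | zero => simpa using aux_vone v hv0 hvmul
  | succ n ih =>
    rw [pow_succ, hvmul, ih, h, ← WithTop.coe_add]
    congr 1
    push_cast
    ring

lemma aux_vadd_eq (hv0 : ∀ x : K, v x = ⊤ ↔ x = 0)
    (hvmul : ∀ x y : K, v (x * y) = v x + v y)
    (hvadd : ∀ x y : K, min (v x) (v y) ≤ v (x + y))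
    (x y : K) (h : v x < v y) : v (x + y) = v x := by
  refine le_antisymm ?_ ?_
  · have h2 := hvadd (x + y) (-y)
    rw [add_neg_cancel_right, aux_vneg v hv0 hvmul y] at h2
    rcases min_le_iff.mp h2 with h3 | h3
    · exact h3
    · exact absurd h3 (not_le.mpr h)
  · have h4 := hvadd x y
    rwa [min_eq_left h.le] at h4

lemma aux_step_b (hv0 : ∀ x : K, v x = ⊤ ↔ x = 0)
    (hvmul : ∀ x y : K, v (x * y) = v x + v y)
    (hvadd : ∀ x y : K, min (v x) (v y) ≤ v (x + y))
    {π a b : K} {q : ℕ} (hq : 2 ≤ q)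
    (hvπ : v π = 1) (heq : b ^ q ^ 2 + π * b = a)
    {α : ℚ} (hva : v a = (α : ℚ)) (hα0 : 0 < α) (hα1 : α < 1) :
    v b = ((α / (q : ℚ) ^ 2 : ℚ) : WithTop ℚ) := by
  have hQ : (2 : ℚ) ≤ (q : ℚ) := by exact_mod_cast hq
  have hq2 : (1 : ℚ) < (q : ℚ) ^ 2 := by nlinarith
  have hb : b ≠ 0 := by
    rintro rfl
    have hq2' : q ^ 2 ≠ 0 := by positivity
    rw [zero_pow hq2', mul_zero, add_zero] at heq
    rw [← heq, (hv0 0).mpr rfl] at hva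
    exact (WithTop.coe_ne_top hva.symm)
  have hbt : v b ≠ ⊤ := fun h => hb ((hv0 b).mp h)
  obtain ⟨t, ht⟩ := WithTop.ne_top_iff_exists.mp hbt
  have h1 : v (b ^ q ^ 2) = (((q : ℚ) ^ 2 * t : ℚ) : WithTop ℚ) := by
    rw [aux_vpow v hv0 hvmul b ht.symm (q ^ 2)]
    norm_cast
  have h2 : v (π * b) = ((1 + t : ℚ) : WithTop ℚ) := by
    rw [hvmul, hvπ, ← ht, ← WithTop.coe_one, ← WithTop.coe_add]
  rcases lt_trichotomy ((q : ℚ) ^ 2 * t) (1 + t) with hlt | heqc | hgt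
  · have hlt' : v (b ^ q ^ 2) < v (π * b) := by
      rw [h1, h2]; exact_mod_cast hlt
    have h3 := aux_vadd_eq v hv0 hvmul hvadd _ _ hlt'
    rw [heq, hva, h1] at h3
    have h4 : α = (q : ℚ) ^ 2 * t := by exact_mod_cast h3
    rw [← ht]
    have hqne : ((q : ℚ) ^ 2) ≠ 0 := by positivity
    have h5 : t = α / (q : ℚ) ^ 2 := by rw [h4]; field_simp
    exact_mod_cast h5
  · exfalso
    have h3 := hvadd (b ^ q ^ 2) (π * b)
    rw [heq, hva, h1, h2] at h3
    have h4 : min ((q : ℚ) ^ 2 * t) (1 + t) ≤ α := by exact_mod_cast h3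
    rw [min_eq_left heqc.le] at h4
    nlinarith
  · exfalso
    have heq' : π * b + b ^ q ^ 2 = a := by rw [add_comm]; exact heq
    have hlt' : v (π * b) < v (b ^ q ^ 2) := by
      rw [h1, h2]; exact_mod_cast hgt
    have h3 := aux_vadd_eq v hv0 hvmul hvadd _ _ hlt'
    rw [heq', hva, h2] at h3
    have h4 : α = 1 + t := by exact_mod_cast h3
    nlinarith

lemma aux_step_a (hv0 : ∀ x : K, v x = ⊤ ↔ x = 0)
    (hvmul : ∀ x y : K, v (x * y) = v x + v y)
    (hvadd : ∀ x y : K, min (v x) (v y) ≤ v (x + y))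
    {π a b : K} {q : ℕ} (hq : 2 ≤ q)
    (hvπ : v π = 1) (heq : π ^ q * a ^ q ^ 2 + a ^ q ^ 4 = b)
    {β : ℚ} (hvb : v b = (β : ℚ)) (hβ0 : 0 < β) (hβ1 : β < 1) :
    v a = ((β / (q : ℚ) ^ 4 : ℚ) : WithTop ℚ) := by
  have hQ : (2 : ℚ) ≤ (q : ℚ) := by exact_mod_cast hq
  have hq24 : (q : ℚ) ^ 2 < (q : ℚ) ^ 4 := by
    have h4' : (4 : ℚ) ≤ (q : ℚ) ^ 2 := by nlinarith
    nlinarith [mul_nonneg (by linarith : (0:ℚ) ≤ (q:ℚ)^2 - 4) (by positivity : (0:ℚ) ≤ (q:ℚ)^2)]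
  have ha : a ≠ 0 := by
    rintro rfl
    have hq2' : q ^ 2 ≠ 0 := by positivity
    have hq4' : q ^ 4 ≠ 0 := by positivity
    rw [zero_pow hq2', zero_pow hq4', mul_zero, add_zero] at heq
    rw [← heq, (hv0 0).mpr rfl] at hvb
    exact (WithTop.coe_ne_top hvb.symm)
  have hat : v a ≠ ⊤ := fun h => ha ((hv0 a).mp h)
  obtain ⟨s, hs⟩ := WithTop.ne_top_iff_exists.mp hat
  have hvπ' : v π = ((1 : ℚ) : WithTop ℚ) := by rw [hvπ]; norm_cast
  have h1 : v (π ^ q * a ^ q ^ 2) = (((q : ℚ) + (q : ℚ) ^ 2 * s : ℚ) : WithTop ℚ) := by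
    rw [hvmul, aux_vpow v hv0 hvmul π hvπ' q, aux_vpow v hv0 hvmul a hs.symm (q ^ 2),
      ← WithTop.coe_add]
    congr 1
    push_cast
    ring
  have h2 : v (a ^ q ^ 4) = (((q : ℚ) ^ 4 * s : ℚ) : WithTop ℚ) := by
    rw [aux_vpow v hv0 hvmul a hs.symm (q ^ 4)]
    norm_cast
  rcases lt_trichotomy ((q : ℚ) + (q : ℚ) ^ 2 * s) ((q : ℚ) ^ 4 * s) with hlt | heqc | hgt
  · exfalso
    have hlt' : v (π ^ q * a ^ q ^ 2) < v (a ^ q ^ 4) := by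
      rw [h1, h2]; exact_mod_cast hlt
    have h3 := aux_vadd_eq v hv0 hvmul hvadd _ _ hlt'
    rw [heq, hvb, h1] at h3
    have h4 : β = (q : ℚ) + (q : ℚ) ^ 2 * s := by exact_mod_cast h3
    have hspos : 0 < s := by nlinarith
    nlinarith
  · exfalso
    have h3 := hvadd (π ^ q * a ^ q ^ 2) (a ^ q ^ 4)
    rw [heq, hvb, h1, h2] at h3
    have h4 : min ((q : ℚ) + (q : ℚ) ^ 2 * s) ((q : ℚ) ^ 4 * s) ≤ β := by exact_mod_cast h3
    rw [min_eq_right heqc.ge] at h4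
    have hspos : 0 < s := by nlinarith
    nlinarith
  · have heq' : a ^ q ^ 4 + π ^ q * a ^ q ^ 2 = b := by rw [add_comm]; exact heq
    have hlt' : v (a ^ q ^ 4) < v (π ^ q * a ^ q ^ 2) := by
      rw [h1, h2]; exact_mod_cast hgt
    have h3 := aux_vadd_eq v hv0 hvmul hvadd _ _ hlt'
    rw [heq', hvb, h2] at h3
    have h4 : β = (q : ℚ) ^ 4 * s := by exact_mod_cast h3
    rw [← hs]
    have h5 : s = β / (q : ℚ) ^ 4 := by rw [h4]; field_simp
    exact_mod_cast h5

end aux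

set_option synthInstance.maxHeartbeats 1000000 in
/-- The valuation computation for the recursions (*ⁱ) and (**ⁱ) of Section 3.2:
`v(aᵢ) = 1/(q^{6i+1}(q²−1))` and `v(bᵢ) = 1/(q^{6i+3}(q²−1))`.
Here `k'` is an algebraic closure of `k((π))` for `k` an algebraic closure of `𝔽_q`, and
`v` is a valuation (written additively, with values in `ℚ ∪ {∞}`) with `v(π) = 1`. -/
theorem statement4 (p r q : ℕ) [Fact p.Prime] (hr : 0 < r) (hq : q = p ^ r)
    (k : Type*) [Field k] [Algebra (GaloisField p r) k] [IsAlgClosure (GaloisField p r) k]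
    (k' : Type*) [Field k'] [Algebra (LaurentSeries k) k'] [IsAlgClosure (LaurentSeries k) k']
    (π : k') (hπ : π = algebraMap (LaurentSeries k) k' (HahnSeries.single (1 : ℤ) 1))
    (v : k' → WithTop ℚ)
    (hv0 : ∀ x : k', v x = ⊤ ↔ x = 0)
    (hvmul : ∀ x y : k', v (x * y) = v x + v y)
    (hvadd : ∀ x y : k', min (v x) (v y) ≤ v (x + y))
    (hvπ : v π = 1)
    (a b : ℕ → k')
    (ha0 : a 0 ≠ 0)
    (haa : π ^ q * a 0 ^ q ^ 2 + a 0 ^ q ^ 4 = 0)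
    (har : ∀ i : ℕ, π ^ q * a (i + 1) ^ q ^ 2 + a (i + 1) ^ q ^ 4 = b i)
    (hbr : ∀ i : ℕ, b i ^ q ^ 2 + π * b i = a i) :
    ∀ i : ℕ,
      v (a i) = ((1 / ((q : ℚ) ^ (6 * i + 1) * ((q : ℚ) ^ 2 - 1)) : ℚ) : WithTop ℚ) ∧
      v (b i) = ((1 / ((q : ℚ) ^ (6 * i + 3) * ((q : ℚ) ^ 2 - 1)) : ℚ) : WithTop ℚ) := by
  have hq2 : 2 ≤ q := by
    have hp2 : 2 ≤ p := (Fact.out : p.Prime).two_le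
    calc 2 ≤ p := hp2
    _ ≤ p ^ r := Nat.le_self_pow hr.ne' p
    _ = q := hq.symm
  have hQ : (2 : ℚ) ≤ (q : ℚ) := by exact_mod_cast hq2
  have hQ0 : (0 : ℚ) < (q : ℚ) := by linarith
  -- denominator bounds
  have hden : ∀ n : ℕ, 1 < (q : ℚ) ^ (n + 1) * ((q : ℚ) ^ 2 - 1) := by
    intro n
    have h1 : (1 : ℚ) ≤ (q : ℚ) ^ n := one_le_pow₀ (by linarith)
    have h2 : (q : ℚ) ^ (n + 1) = (q : ℚ) ^ n * (q : ℚ) := pow_succ _ _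
    have h3 : (2 : ℚ) ≤ (q : ℚ) ^ (n + 1) := by rw [h2]; nlinarith
    have h4 : (3 : ℚ) ≤ (q : ℚ) ^ 2 - 1 := by nlinarith
    nlinarith [mul_le_mul h3 h4 (by norm_num) (by linarith)]
  have hA : ∀ n : ℕ, 0 < 1 / ((q : ℚ) ^ (n + 1) * ((q : ℚ) ^ 2 - 1)) ∧
      1 / ((q : ℚ) ^ (n + 1) * ((q : ℚ) ^ 2 - 1)) < 1 := by
    intro n
    have h1 := hden n
    constructor
    · positivity
    · exact (div_lt_one (by linarith)).mpr h1
  -- base value of v (a 0)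
  have va0 : v (a 0) = ((1 / ((q : ℚ) ^ (6 * 0 + 1) * ((q : ℚ) ^ 2 - 1)) : ℚ) : WithTop ℚ) := by
    have hat : v (a 0) ≠ ⊤ := fun h => ha0 ((hv0 _).mp h)
    obtain ⟨t, ht⟩ := WithTop.ne_top_iff_exists.mp hat
    have heq : a 0 ^ q ^ 4 = -(π ^ q * a 0 ^ q ^ 2) := by linear_combination haa
    have hvπ' : v π = ((1 : ℚ) : WithTop ℚ) := by rw [hvπ]; norm_cast
    have hL : v (a 0 ^ q ^ 4) = (((q : ℚ) ^ 4 * t : ℚ) : WithTop ℚ) := by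
      rw [aux_vpow v hv0 hvmul (a 0) ht.symm (q ^ 4)]; norm_cast
    have hR : v (π ^ q * a 0 ^ q ^ 2) = (((q : ℚ) + (q : ℚ) ^ 2 * t : ℚ) : WithTop ℚ) := by
      rw [hvmul, aux_vpow v hv0 hvmul π hvπ' q, aux_vpow v hv0 hvmul (a 0) ht.symm (q ^ 2),
        ← WithTop.coe_add]
      congr 1
      push_cast
      ring
    have hcomb : (((q : ℚ) ^ 4 * t : ℚ) : WithTop ℚ) = (((q : ℚ) + (q : ℚ) ^ 2 * t : ℚ) : WithTop ℚ) := by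
      rw [← hL, heq, aux_vneg v hv0 hvmul, hR]
    have hmain : (q : ℚ) ^ 4 * t = (q : ℚ) + (q : ℚ) ^ 2 * t := by exact_mod_cast hcomb
    have hne : (q : ℚ) ^ 4 - (q : ℚ) ^ 2 > 0 := by
      have h4' : (4 : ℚ) ≤ (q : ℚ) ^ 2 := by nlinarith
      nlinarith [mul_nonneg (by linarith : (0:ℚ) ≤ (q:ℚ)^2 - 4)
        (by positivity : (0:ℚ) ≤ (q:ℚ)^2)]
    have htval : t = 1 / ((q : ℚ) ^ (6 * 0 + 1) * ((q : ℚ) ^ 2 - 1)) := by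
      have ht1 : t = (q : ℚ) / ((q : ℚ) ^ 4 - (q : ℚ) ^ 2) := by
        rw [eq_div_iff (ne_of_gt hne)]
        linear_combination hmain
      have e : (q : ℚ) ^ (6 * 0 + 1) = (q : ℚ) := by norm_num
      rw [ht1, e, div_eq_div_iff (ne_of_gt hne)
        (by nlinarith : ((q:ℚ) * ((q:ℚ)^2 - 1)) ≠ 0)]
      ring
    rw [← ht]
    exact_mod_cast htval
  intro i
  induction i with
  | zero =>
    refine ⟨va0, ?_⟩
    have hb0 := aux_step_b v hv0 hvmul hvadd hq2 hvπ (hbr 0) va0 (hA (6 * 0)).1 (hA (6 * 0)).2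
    rw [hb0]
    congr 1
    rw [div_div]
    congr 1
    ring
  | succ i ih =>
    obtain ⟨iha, ihb⟩ := ih
    have hva := aux_step_a v hv0 hvmul hvadd hq2 hvπ (har i) ihb (hA (6 * i + 2)).1 (hA (6 * i + 2)).2
    have e1 : (1 / ((q : ℚ) ^ (6 * i + 3) * ((q : ℚ) ^ 2 - 1))) / (q : ℚ) ^ 4
        = 1 / ((q : ℚ) ^ (6 * (i + 1) + 1) * ((q : ℚ) ^ 2 - 1)) := by
      rw [div_div]
      congr 1
      ring
    rw [e1] at hva
    refine ⟨hva, ?_⟩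
    have hvb := aux_step_b v hv0 hvmul hvadd hq2 hvπ (hbr (i + 1)) hva
      (hA (6 * (i + 1))).1 (hA (6 * (i + 1))).2
    rw [hvb]
    congr 1
    rw [div_div]
    congr 1
    ring
end

section
/- Suppose (u_i)_{i≥0} and (w_i)_{i≥0} are elements of k' satisfying: u₀ ≠ 0; π·u₀^{q³} + u₀^{q⁵} = 0; u_i = π·w_i^{q³} + w_i^{q⁵} for all i ≥ 0; and w_{i−1} = π·u_i^{q³} + u_i^{q⁵} for all i ≥ 1. Then for all i ≥ 0 one has v(u_i) = 1/(q^{10i}(q⁵−q³)) and v(w_i) = 1/(q^{10i+5}(q⁵−q³)). -/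
/-!
The valuation of `x` is recovered from that of `π x^{q³} + x^{q⁵}`: if the latter is `a < 1`,
the term `x^{q⁵}` must be the dominant one (otherwise `v x < 0`, and then `x^{q⁵}` would be
smaller still), so `v x = a / q⁵`. For `u₀` the two terms cancel, which forces them to have equal
valuation, `q⁵ v(u₀) = 1 + q³ v(u₀)`. Alternating the two recursions divides the valuation by
`q⁵` at each step.
-/

theorem map_one_eq_zero_of_map_mul {R : Type*} [Monoid R] {f : R → WithTop ℚ} (h1 : f 1 ≠ ⊤)
    (hmul : ∀ x y, f (x * y) = f x + f y) : f 1 = 0 := by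
  obtain ⟨c, hc⟩ := WithTop.ne_top_iff_exists.mp h1
  have h := hmul 1 1
  rw [mul_one, ← hc, ← WithTop.coe_add, WithTop.coe_inj] at h
  rw [← hc, show c = 0 by linarith]
  rfl

namespace AddValuation

variable {K : Type*} [Field K] (v : AddValuation K (WithTop ℚ))

theorem exists_eq_coe {x : K} (hx : x ≠ 0) : ∃ b : ℚ, v x = b :=
  (WithTop.ne_top_iff_exists.mp (v.ne_top_iff.mpr hx)).imp fun _ h => h.symm

theorem map_pow_of_eq_coe {x : K} {b : ℚ} (hx : v x = b) (n : ℕ) :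
    v (x ^ n) = ((n * b : ℚ) : WithTop ℚ) := by
  rw [map_pow, hx, ← WithTop.coe_nsmul, nsmul_eq_mul]

variable {π : K}

theorem eq_one_div_sub_of_mul_pow_add_pow_eq_zero (hπ : v π = 1) {x : K} (hx : x ≠ 0) {m n : ℕ}
    (hmn : m < n) (h : π * x ^ m + x ^ n = 0) : v x = ((1 / (n - m : ℚ) : ℚ) : WithTop ℚ) := by
  obtain ⟨b, hb⟩ := v.exists_eq_coe hx
  have hval : v (x ^ n) = v (π * x ^ m) := by rw [eq_neg_of_add_eq_zero_right h, map_neg]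
  rw [map_mul, hπ, v.map_pow_of_eq_coe hb, v.map_pow_of_eq_coe hb] at hval
  have hb' : (n : ℚ) * b = 1 + m * b := by exact_mod_cast hval
  have hnm : (m : ℚ) < n := by exact_mod_cast hmn
  rw [hb, WithTop.coe_inj, eq_div_iff (by linarith)]
  linarith

theorem eq_div_of_map_mul_pow_add_pow (hπ : v π = 1) {x : K} {m n : ℕ} (hm : m ≠ 0) (hmn : m ≤ n)
    {a : ℚ} (ha : a < 1) (h : v (π * x ^ m + x ^ n) = a) : v x = ((a / n : ℚ) : WithTop ℚ) := by
  have hx : x ≠ 0 := by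
    rintro rfl
    simp [zero_pow hm, zero_pow (hm.bot_lt.trans_le hmn).ne'] at h
  obtain ⟨b, hb⟩ := v.exists_eq_coe hx
  have hvπx : v (π * x ^ m) = ((1 + m * b : ℚ) : WithTop ℚ) := by
    rw [map_mul, hπ, v.map_pow_of_eq_coe hb]
    rfl
  have hdom : (n : ℚ) * b < 1 + m * b := by
    by_contra! hle
    have hlow : ((1 + m * b : ℚ) : WithTop ℚ) ≤ a :=
      h ▸ v.map_le_add hvπx.ge (by rw [v.map_pow_of_eq_coe hb]; exact_mod_cast hle)
    have hmb : (m : ℚ) * b < 0 := by linarith [WithTop.coe_le_coe.mp hlow]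
    have hb0 : b < 0 := neg_of_mul_neg_right hmb (Nat.cast_nonneg m)
    nlinarith [mul_le_mul_of_nonpos_right (Nat.cast_le (α := ℚ).mpr hmn) hb0.le]
  have hsum := v.map_add_eq_of_lt_right (x := π * x ^ m) (y := x ^ n)
    (by rw [hvπx, v.map_pow_of_eq_coe hb]; exact_mod_cast hdom)
  rw [h, v.map_pow_of_eq_coe hb, WithTop.coe_inj] at hsum
  have hn : (n : ℚ) ≠ 0 := by exact_mod_cast (hm.bot_lt.trans_le hmn).ne'
  rw [hb, WithTop.coe_inj, hsum]
  field_simp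

theorem map_eq_of_map_mul_pow_three_add_pow_five (hπ : v π = 1) {q : ℕ} (hq : 2 ≤ q) {x : K}
    (j : ℕ)
    (h : v (π * x ^ q ^ 3 + x ^ q ^ 5) =
      ((1 / ((q : ℚ) ^ j * ((q : ℚ) ^ 5 - (q : ℚ) ^ 3)) : ℚ) : WithTop ℚ)) :
    v x = ((1 / ((q : ℚ) ^ (j + 5) * ((q : ℚ) ^ 5 - (q : ℚ) ^ 3)) : ℚ) : WithTop ℚ) := by
  have hqQ : (2 : ℚ) ≤ q := by exact_mod_cast hq
  have hqj : (1 : ℚ) ≤ (q : ℚ) ^ j := one_le_pow₀ (by linarith)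
  have hD : 1 < (q : ℚ) ^ 5 - (q : ℚ) ^ 3 := by
    have hq3 : (2 : ℚ) ^ 3 ≤ (q : ℚ) ^ 3 := pow_le_pow_left₀ (by norm_num) hqQ 3
    have hq2' : (3 : ℚ) ≤ (q : ℚ) ^ 2 - 1 := by nlinarith
    nlinarith [mul_le_mul hq3 hq2' (by norm_num) (by positivity)]
  have ha : 1 / ((q : ℚ) ^ j * ((q : ℚ) ^ 5 - (q : ℚ) ^ 3)) < 1 := by
    rw [div_lt_one (by positivity)]
    nlinarith
  rw [v.eq_div_of_map_mul_pow_add_pow hπ (pow_ne_zero 3 (by omega))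
    (Nat.pow_le_pow_right (by omega) (by norm_num)) ha h]
  push_cast
  rw [pow_add, div_div]
  ring_nf

end AddValuation

theorem statement9_general (p r q : ℕ) [Fact p.Prime] (hr : 0 < r) (hq : q = p ^ r)
    (k' : Type*) [Field k']
    (π : k')
    (v : k' → WithTop ℚ)
    (hv0 : ∀ s : k', v s = ⊤ ↔ s = 0)
    (hvmul : ∀ s x : k', v (s * x) = v s + v x)
    (hvadd : ∀ s x : k', min (v s) (v x) ≤ v (s + x))
    (hvπ : v π = 1)
    (u w : ℕ → k')
    (hu0 : u 0 ≠ 0)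
    (huu : π * u 0 ^ q ^ 3 + u 0 ^ q ^ 5 = 0)
    (hur : ∀ i : ℕ, u i = π * w i ^ q ^ 3 + w i ^ q ^ 5)
    (hwr : ∀ i : ℕ, w i = π * u (i + 1) ^ q ^ 3 + u (i + 1) ^ q ^ 5) :
    ∀ i : ℕ,
      v (u i) = ((1 / ((q : ℚ) ^ (10 * i) * ((q : ℚ) ^ 5 - (q : ℚ) ^ 3)) : ℚ) : WithTop ℚ) ∧
      v (w i) = ((1 / ((q : ℚ) ^ (10 * i + 5) * ((q : ℚ) ^ 5 - (q : ℚ) ^ 3)) : ℚ) : WithTop ℚ) := by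
  have hq2 : 2 ≤ q := hq ▸ (Fact.out : p.Prime).two_le.trans (Nat.le_self_pow hr.ne' p)
  let V : AddValuation k' (WithTop ℚ) := .of v ((hv0 0).mpr rfl)
    (map_one_eq_zero_of_map_mul ((hv0 1).not.mpr one_ne_zero) hvmul) hvadd hvmul
  have hVπ : V π = 1 := hvπ
  have hw (i : ℕ)
      (hui : v (u i) = ((1 / ((q : ℚ) ^ (10 * i) * ((q : ℚ) ^ 5 - (q : ℚ) ^ 3)) : ℚ) : WithTop ℚ)) :
      v (w i) = ((1 / ((q : ℚ) ^ (10 * i + 5) * ((q : ℚ) ^ 5 - (q : ℚ) ^ 3)) : ℚ) : WithTop ℚ) :=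
    V.map_eq_of_map_mul_pow_three_add_pow_five hVπ hq2 (10 * i) (hur i ▸ hui)
  have hu (i : ℕ) :
      v (u i) = ((1 / ((q : ℚ) ^ (10 * i) * ((q : ℚ) ^ 5 - (q : ℚ) ^ 3)) : ℚ) : WithTop ℚ) := by
    induction i with
    | zero =>
      have h := V.eq_one_div_sub_of_mul_pow_add_pow_eq_zero hVπ hu0
        (Nat.pow_lt_pow_right hq2 (by norm_num : 3 < 5)) huu
      push_cast at h
      simpa [V] using h
    | succ i ih =>
      exact V.map_eq_of_map_mul_pow_three_add_pow_five hVπ hq2 (10 * i + 5) (hwr i ▸ hw i ih)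
  exact fun i => ⟨hu i, hw i (hu i)⟩

set_option synthInstance.maxHeartbeats 1000000 in
/-- The valuation computation for the recursions of Section 3.3 for the entries
`uᵢ = h³⁴ᵢ`, `wᵢ = h³⁵ᵢ` of the inverse matrix `g⁻¹` (with `w₋₁ = 0`):
`v(uᵢ) = 1/(q^{10i}(q⁵−q³))` and `v(wᵢ) = 1/(q^{10i+5}(q⁵−q³))`. -/
theorem statement9 (p r q : ℕ) [Fact p.Prime] (hr : 0 < r) (hq : q = p ^ r)
    (k : Type*) [Field k] [Algebra (GaloisField p r) k] [IsAlgClosure (GaloisField p r) k]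
    (k' : Type*) [Field k'] [Algebra (LaurentSeries k) k'] [IsAlgClosure (LaurentSeries k) k']
    (π : k') (hπ : π = algebraMap (LaurentSeries k) k' (HahnSeries.single (1 : ℤ) 1))
    (v : k' → WithTop ℚ)
    (hv0 : ∀ s : k', v s = ⊤ ↔ s = 0)
    (hvmul : ∀ s x : k', v (s * x) = v s + v x)
    (hvadd : ∀ s x : k', min (v s) (v x) ≤ v (s + x))
    (hvπ : v π = 1)
    (u w : ℕ → k')
    (hu0 : u 0 ≠ 0)
    (huu : π * u 0 ^ q ^ 3 + u 0 ^ q ^ 5 = 0)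
    (hur : ∀ i : ℕ, u i = π * w i ^ q ^ 3 + w i ^ q ^ 5)
    (hwr : ∀ i : ℕ, w i = π * u (i + 1) ^ q ^ 3 + u (i + 1) ^ q ^ 5) :
    ∀ i : ℕ,
      v (u i) = ((1 / ((q : ℚ) ^ (10 * i) * ((q : ℚ) ^ 5 - (q : ℚ) ^ 3)) : ℚ) : WithTop ℚ) ∧
      v (w i) = ((1 / ((q : ℚ) ^ (10 * i + 5) * ((q : ℚ) ^ 5 - (q : ℚ) ^ 3)) : ℚ) : WithTop ℚ) :=
  statement9_general p r q hr hq k' π v hv0 hvmul hvadd hvπ u w hu0 huu hur hwr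
end
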